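/- For any three sets A, B, C of a domain Ω, each finite with cardinality at least 2, such that none of the three is strictly contained in any of the other two, the information set-distance satisfies the triangle inequality: d(A,C) ≤ d(A,B) + d(B,C). -/
import Mathlib


noncomputable def t (x : ℝ) : ℝ := if 1 ≤ x then x else 1

noncomputable def delta {Ω : Type*} [DecidableEq Ω] (A B : Finset Ω) : ℝ :=
  Real.logb 2 (t (((B \ A).card : ℝ) * (A.card : ℝ)))

noncomputable def infoDist {Ω : Type*} [DecidableEq Ω] (A B : Finset Ω) : ℝ :=
  max (delta A B) (delta B A)

lemma t_eq_max (x : ℝ) : t x = max x 1 := by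
  unfold t
  rcases le_total 1 x with h | h
  · rw [if_pos h, max_eq_left h]
  · rcases eq_or_lt_of_le h with h' | h'
    · simp [← h']
    · rw [if_neg (not_le.2 h'), max_eq_right h]

lemma one_le_t (x : ℝ) : 1 ≤ t x := by rw [t_eq_max]; exact le_max_right _ _

lemma g_nonneg (x : ℝ) : 0 ≤ Real.logb 2 (t x) :=
  Real.logb_nonneg one_lt_two (one_le_t x)

lemma g_mono {a b : ℝ} (h : a ≤ b) : Real.logb 2 (t a) ≤ Real.logb 2 (t b) := by
  apply Real.logb_le_logb_of_le one_lt_two (lt_of_lt_of_le one_pos (one_le_t a))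
  rw [t_eq_max, t_eq_max]
  exact max_le_max h le_rfl

lemma key {x y z : ℝ} (hx : 0 ≤ x) (hy : 0 ≤ y) (hz : z ≤ x * y) :
    Real.logb 2 (t z) ≤ Real.logb 2 (t x) + Real.logb 2 (t y) := by
  have h1 : t z ≤ t x * t y := by
    rw [t_eq_max, t_eq_max, t_eq_max]
    have hx1 : x ≤ max x 1 := le_max_left _ _
    have hx2 : (1:ℝ) ≤ max x 1 := le_max_right _ _
    have hy1 : y ≤ max y 1 := le_max_left _ _
    have hy2 : (1:ℝ) ≤ max y 1 := le_max_right _ _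
    rcases le_total z 1 with h | h
    · rw [max_eq_right h]; nlinarith
    · rw [max_eq_left h]; nlinarith
  have h2 : Real.logb 2 (t z) ≤ Real.logb 2 (t x * t y) :=
    Real.logb_le_logb_of_le one_lt_two (lt_of_lt_of_le one_pos (one_le_t z)) h1
  rw [Real.logb_mul (ne_of_gt (lt_of_lt_of_le one_pos (one_le_t x)))
    (ne_of_gt (lt_of_lt_of_le one_pos (one_le_t y)))] at h2
  exact h2

lemma infoDist_eq {Ω : Type*} [DecidableEq Ω] (A B : Finset Ω) :
    infoDist A B = Real.logb 2 (t (max (((B \ A).card : ℝ) * A.card)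
      (((A \ B).card : ℝ) * B.card))) := by
  unfold infoDist delta
  rcases le_total (((B \ A).card : ℝ) * A.card) (((A \ B).card : ℝ) * B.card) with h | h
  · rw [max_eq_right h, max_eq_right (g_mono h)]
  · rw [max_eq_left h, max_eq_left (g_mono h)]

lemma not_ssubset_cases {Ω : Type*} [DecidableEq Ω] {A B : Finset Ω}
    (h1 : ¬ A ⊂ B) (h2 : ¬ B ⊂ A) :
    A = B ∨ ((A \ B).Nonempty ∧ (B \ A).Nonempty) := by
  by_cases hAB : A ⊆ B
  · left
    rcases eq_or_lt_of_le hAB with h | h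
    · exact h
    · exact absurd h h1
  · right
    constructor
    · rw [Finset.sdiff_nonempty]; exact hAB
    · rw [Finset.sdiff_nonempty]
      intro hBA
      rcases eq_or_lt_of_le hBA with h | h
      · exact hAB h.symm.le
      · exact h2 h

set_option maxHeartbeats 1000000 in
theorem stmt_13 {Ω : Type*} [DecidableEq Ω] (A B C : Finset Ω)
    (hA : 2 ≤ A.card) (hB : 2 ≤ B.card) (hC : 2 ≤ C.card)
    (hAB : ¬ A ⊂ B) (hBA : ¬ B ⊂ A)
    (hAC : ¬ A ⊂ C) (hCA : ¬ C ⊂ A)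
    (hBC : ¬ B ⊂ C) (hCB : ¬ C ⊂ B) :
    infoDist A C ≤ infoDist A B + infoDist B C := by
  have hnn1 : 0 ≤ infoDist A B := le_trans (g_nonneg _) (le_max_left _ _)
  have hnn2 : 0 ≤ infoDist B C := le_trans (g_nonneg _) (le_max_left _ _)
  rcases not_ssubset_cases hAB hBA with rfl | ⟨h1, h2⟩
  · -- A = B
    linarith
  rcases not_ssubset_cases hBC hCB with rfl | ⟨h3, h4⟩
  · -- B = C
    linarith
  -- main case
  rw [infoDist_eq, infoDist_eq, infoDist_eq]
  set a : ℝ := (A.card : ℝ) with ha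
  set b : ℝ := (B.card : ℝ) with hb'
  set c : ℝ := (C.card : ℝ) with hc'
  have hca : ((C \ A).card : ℝ) ≤ ((C \ B).card : ℝ) + ((B \ A).card : ℝ) := by
    have : (C \ A).card ≤ (C \ B).card + (B \ A).card := by
      calc (C \ A).card ≤ ((C \ B) ∪ (B \ A)).card := by
            apply Finset.card_le_card
            intro x hx
            simp only [Finset.mem_sdiff, Finset.mem_union] at *
            by_cases hxb : x ∈ B
            · exact Or.inr ⟨hxb, hx.2⟩
            · exact Or.inl ⟨hx.1, hxb⟩
        _ ≤ (C \ B).card + (B \ A).card := Finset.card_union_le _ _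
    exact_mod_cast this
  have hac : ((A \ C).card : ℝ) ≤ ((A \ B).card : ℝ) + ((B \ C).card : ℝ) := by
    have : (A \ C).card ≤ (A \ B).card + (B \ C).card := by
      calc (A \ C).card ≤ ((A \ B) ∪ (B \ C)).card := by
            apply Finset.card_le_card
            intro x hx
            simp only [Finset.mem_sdiff, Finset.mem_union] at *
            by_cases hxb : x ∈ B
            · exact Or.inr ⟨hxb, hx.2⟩
            · exact Or.inl ⟨hx.1, hxb⟩
        _ ≤ (A \ B).card + (B \ C).card := Finset.card_union_le _ _
    exact_mod_cast this
  have hab1 : (1:ℝ) ≤ ((A \ B).card : ℝ) := by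
    exact_mod_cast Finset.card_pos.2 h1
  have hba1 : (1:ℝ) ≤ ((B \ A).card : ℝ) := by
    exact_mod_cast Finset.card_pos.2 h2
  have hbc1 : (1:ℝ) ≤ ((B \ C).card : ℝ) := by
    exact_mod_cast Finset.card_pos.2 h3
  have hcb1 : (1:ℝ) ≤ ((C \ B).card : ℝ) := by
    exact_mod_cast Finset.card_pos.2 h4
  have haR : (2:ℝ) ≤ a := by rw [ha]; exact_mod_cast hA
  have hbR : (2:ℝ) ≤ b := by rw [hb']; exact_mod_cast hB
  have hcR : (2:ℝ) ≤ c := by rw [hc']; exact_mod_cast hC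
  apply key
  · positivity
  · positivity
  · set X := max (((B \ A).card : ℝ) * a) (((A \ B).card : ℝ) * b) with hX
    set Y := max (((C \ B).card : ℝ) * b) (((B \ C).card : ℝ) * c) with hY
    have hX1 : ((B \ A).card : ℝ) * a ≤ X := le_max_left _ _
    have hX2 : ((A \ B).card : ℝ) * b ≤ X := le_max_right _ _
    have hY1 : ((C \ B).card : ℝ) * b ≤ Y := le_max_left _ _
    have hY2 : ((B \ C).card : ℝ) * c ≤ Y := le_max_right _ _
    apply max_le
    · calc ((C \ A).card : ℝ) * a
          ≤ (((C \ B).card : ℝ) + ((B \ A).card : ℝ)) * a := by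
            apply mul_le_mul_of_nonneg_right hca (by linarith)
        _ ≤ (2 * ((B \ A).card : ℝ) * ((C \ B).card : ℝ)) * a := by
            apply mul_le_mul_of_nonneg_right ?_ (by linarith)
            nlinarith [mul_nonneg (sub_nonneg.2 hba1) (sub_nonneg.2 hcb1)]
        _ ≤ (((B \ A).card : ℝ) * a) * (((C \ B).card : ℝ) * b) := by
            nlinarith [mul_nonneg (mul_nonneg (by linarith : (0:ℝ) ≤ ((B \ A).card : ℝ))
              (by linarith : (0:ℝ) ≤ ((C \ B).card : ℝ))) (by linarith : (0:ℝ) ≤ a)]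
        _ ≤ X * Y := mul_le_mul hX1 hY1 (by positivity) (le_trans (by positivity) hX1)
    · calc ((A \ C).card : ℝ) * c
          ≤ (((A \ B).card : ℝ) + ((B \ C).card : ℝ)) * c := by
            apply mul_le_mul_of_nonneg_right hac (by linarith)
        _ ≤ (2 * ((A \ B).card : ℝ) * ((B \ C).card : ℝ)) * c := by
            apply mul_le_mul_of_nonneg_right ?_ (by linarith)
            nlinarith [mul_nonneg (sub_nonneg.2 hab1) (sub_nonneg.2 hbc1)]
        _ ≤ (((A \ B).card : ℝ) * b) * (((B \ C).card : ℝ) * c) := by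
            nlinarith [mul_nonneg (mul_nonneg (by linarith : (0:ℝ) ≤ ((A \ B).card : ℝ))
              (by linarith : (0:ℝ) ≤ ((B \ C).card : ℝ))) (by linarith : (0:ℝ) ≤ c)]
        _ ≤ X * Y := mul_le_mul hX2 hY2 (by positivity) (le_trans (by positivity) hX2)
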